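/- arXiv:2405.20237 — 3 statements merged into one kernel-verified Lean document; each statement's English description precedes it below -/
import Mathlib

section
/- Let O be a nonzero Hermitian n×n complex matrix, V an n×n unitary matrix, and let {ρ_s}_{s∈S} be a finite family of n×n density matrices together with probability weights p_s ≥ 0, Σ_s p_s = 1 (modelling the data distribution). Let U_1,…,U_K be n×n unitary matrices and α_1,…,α_K ≥ 0 with Σ_k α_k = 1. Suppose ‖U_k − V‖ ≤ ε₁ for every k and ‖Σ_k α_k U_k − V‖ ≤ ε₂, for some ε₁, ε₂ ≥ 0. Define the ground-truth values h_s := Re Tr(O · V ρ_s Vᴴ), the density-model predictions f_s := Re Tr(O · Σ_k α_k U_k ρ_s U_kᴴ), and set δ₁ := 2 ε₁ ‖O‖ and δ₂ := 2 ε₂ ‖O‖. Then Σ_s p_s |h_s − f_s| ≤ δ₁²/(4‖O‖) + 2 δ₂. -/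
/-! With `G = ∑ α_k U_k - V`, convexity of the weights gives the exact expansion
`∑ α_k U_k ρ U_kᴴ - V ρ Vᴴ = G ρ Vᴴ + V ρ Gᴴ + ∑ α_k (U_k - V) ρ (U_k - V)ᴴ`,
so the individual errors `U_k - V` only enter quadratically and the first-order error is that
of the mixture. Each term `Tr(O A ρ Bᴴ)` is at most `‖O‖ ‖A‖ ‖B‖`, because `|Tr(M ρ)| ≤ ‖M‖` for a
density matrix `ρ` (diagonalise `ρ` by a unitary). Hence every prediction is off by at most
`‖O‖ (ε₁² + 2 ε₂)`, and averaging over the data keeps this bound. -/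

open scoped Matrix.Norms.L2Operator ComplexOrder
open Matrix

lemma sum_smul_mul_mul_star_sub {ι A : Type*} [Fintype ι] [Ring A] [StarRing A] [Algebra ℝ A]
    [StarModule ℝ A] (α : ι → ℝ) (hα : ∑ k, α k = 1) (u : ι → A) (v r : A) :
    ∑ k, α k • (u k * r * star (u k)) - v * r * star v
      = (∑ k, α k • u k - v) * r * star v + v * r * star (∑ k, α k • u k - v)
        + ∑ k, α k • ((u k - v) * r * star (u k - v)) := by
  have hv : ∀ x : A, ∑ k, α k • x = x := fun x => by rw [← Finset.sum_smul, hα, one_smul]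
  simp only [star_sub, star_sum, star_smul, star_trivial, sub_mul, mul_sub, smul_sub,
    Finset.sum_sub_distrib, Finset.sum_mul, Finset.mul_sum, smul_mul_assoc, mul_smul_comm, hv]
  abel

lemma CStarRing.norm_le_one_of_mem_unitary {E : Type*} [NormedRing E] [StarRing E] [CStarRing E]
    {U : E} (hU : U ∈ unitary E) : ‖U‖ ≤ 1 := by
  rcases subsingleton_or_nontrivial E with _ | _
  · simp [Subsingleton.elim U 0]
  · exact (norm_of_mem_unitary hU).le

namespace Matrix

variable {𝕜 : Type*} [RCLike 𝕜] {m n : Type*} [Fintype m] [Fintype n] [DecidableEq n]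

lemma norm_entry_le_l2_opNorm (A : Matrix m n 𝕜) (i : m) (j : n) : ‖A i j‖ ≤ ‖A‖ := by
  have hcol := A.l2_opNorm_mulVec (EuclideanSpace.single j 1)
  rw [PiLp.norm_single, norm_one, mul_one] at hcol
  calc ‖A i j‖ = ‖(EuclideanSpace.equiv m 𝕜).symm (A *ᵥ (EuclideanSpace.single j 1).ofLp) i‖ := by
        simp
    _ ≤ ‖A‖ := (PiLp.norm_apply_le _ i).trans hcol

lemma PosSemidef.norm_trace_mul_le (M : Matrix n n 𝕜) {R : Matrix n n 𝕜} (hR : R.PosSemidef) :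
    ‖(M * R).trace‖ ≤ ‖M‖ * RCLike.re R.trace := by
  set W : Matrix n n 𝕜 := (hR.1.eigenvectorUnitary : Matrix n n 𝕜)
  have hW : W ∈ unitary (Matrix n n 𝕜) := hR.1.eigenvectorUnitary.2
  set μ := hR.1.eigenvalues
  have hspec : R = W * diagonal (RCLike.ofReal ∘ μ) * star W := hR.1.spectral_theorem
  have hdiag : ∀ i, ‖(star W * M * W) i i‖ ≤ ‖M‖ := fun i =>
    calc _ ≤ ‖star W * M * W‖ := norm_entry_le_l2_opNorm _ i i
      _ = ‖M‖ := by
        rw [CStarRing.norm_mul_mem_unitary _ hW,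
          CStarRing.norm_mem_unitary_mul _ (Unitary.star_mem hW)]
  calc ‖(M * R).trace‖ = ‖∑ i, (star W * M * W) i i * μ i‖ := by
        rw [hspec, ← mul_assoc, ← mul_assoc, trace_mul_cycle, ← mul_assoc]
        simp [trace, mul_diagonal]
    _ ≤ ∑ i, ‖M‖ * μ i := by
        refine (norm_sum_le _ _).trans (Finset.sum_le_sum fun i _ => ?_)
        rw [norm_mul, RCLike.norm_ofReal, abs_of_nonneg (hR.eigenvalues_nonneg i)]
        exact mul_le_mul_of_nonneg_right (hdiag i) (hR.eigenvalues_nonneg i)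
    _ = ‖M‖ * RCLike.re R.trace := by
        rw [← Finset.mul_sum, hR.1.trace_eq_sum_eigenvalues, map_sum]
        simp [μ]

lemma PosSemidef.norm_trace_mul_mul_mul_conjTranspose_le (O A B : Matrix n n 𝕜)
    {R : Matrix n n 𝕜} (hR : R.PosSemidef) :
    ‖(O * (A * R * Bᴴ)).trace‖ ≤ ‖O‖ * ‖A‖ * ‖B‖ * RCLike.re R.trace := by
  have hcycle : (O * (A * R * Bᴴ)).trace = (Bᴴ * O * A * R).trace := by
    rw [← mul_assoc, ← mul_assoc, trace_mul_comm, ← mul_assoc, ← mul_assoc]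
  have hnorm : ‖Bᴴ * O * A‖ ≤ ‖O‖ * ‖A‖ * ‖B‖ :=
    calc ‖Bᴴ * O * A‖ ≤ ‖Bᴴ‖ * ‖O‖ * ‖A‖ :=
          (l2_opNorm_mul _ _).trans (by gcongr; exact l2_opNorm_mul _ _)
      _ = ‖O‖ * ‖A‖ * ‖B‖ := by rw [l2_opNorm_conjTranspose]; ring
  rw [hcycle]
  exact (hR.norm_trace_mul_le _).trans (by gcongr; exact (RCLike.nonneg_iff.mp hR.trace_nonneg).1)

lemma norm_trace_mul_mixture_sub_le (O V : Matrix n n 𝕜) (hV : ‖V‖ ≤ 1) {R : Matrix n n 𝕜}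
    (hR : R.PosSemidef) (hRtr : R.trace = 1) {ι : Type*} [Fintype ι] (U : ι → Matrix n n 𝕜)
    (α : ι → ℝ) (hα : ∀ k, 0 ≤ α k) (hαsum : ∑ k, α k = 1) {ε₁ ε₂ : ℝ}
    (hclose : ∀ k, ‖U k - V‖ ≤ ε₁) (hlcu : ‖∑ k, α k • U k - V‖ ≤ ε₂) :
    ‖(O * (∑ k, α k • (U k * R * (U k)ᴴ) - V * R * Vᴴ)).trace‖ ≤ ‖O‖ * (ε₁ ^ 2 + 2 * ε₂) := by
  have hsplit := sum_smul_mul_mul_star_sub α hαsum U V R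
  simp only [star_eq_conjTranspose] at hsplit
  set G := ∑ k, α k • U k - V
  have hsandwich (A B : Matrix n n 𝕜) : ‖(O * (A * R * Bᴴ)).trace‖ ≤ ‖O‖ * ‖A‖ * ‖B‖ := by
    simpa [hRtr] using hR.norm_trace_mul_mul_mul_conjTranspose_le O A B
  have hε₂ : 0 ≤ ε₂ := (norm_nonneg _).trans hlcu
  have hGV : ‖(O * (G * R * Vᴴ)).trace‖ ≤ ‖O‖ * ε₂ :=
    calc _ ≤ ‖O‖ * ‖G‖ * ‖V‖ := hsandwich G V
      _ ≤ ‖O‖ * ε₂ * 1 := by gcongr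
      _ = ‖O‖ * ε₂ := mul_one _
  have hVG : ‖(O * (V * R * Gᴴ)).trace‖ ≤ ‖O‖ * ε₂ :=
    calc _ ≤ ‖O‖ * ‖V‖ * ‖G‖ := hsandwich V G
      _ ≤ ‖O‖ * 1 * ε₂ := by gcongr
      _ = ‖O‖ * ε₂ := by rw [mul_one]
  have hEE : ‖(O * ∑ k, α k • ((U k - V) * R * (U k - V)ᴴ)).trace‖ ≤ ‖O‖ * ε₁ ^ 2 :=
    calc _ = ‖∑ k, α k • (O * ((U k - V) * R * (U k - V)ᴴ)).trace‖ := by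
          simp only [Finset.mul_sum, mul_smul_comm, trace_sum, trace_smul]
      _ ≤ ∑ k, α k * (‖O‖ * ε₁ ^ 2) := by
          refine (norm_sum_le _ _).trans (Finset.sum_le_sum fun k _ => ?_)
          rw [norm_smul, Real.norm_of_nonneg (hα k)]
          refine mul_le_mul_of_nonneg_left ?_ (hα k)
          calc _ ≤ ‖O‖ * ‖U k - V‖ * ‖U k - V‖ := hsandwich _ _
            _ ≤ ‖O‖ * ε₁ ^ 2 := by rw [mul_assoc, ← sq]; gcongr; exact hclose k
      _ = ‖O‖ * ε₁ ^ 2 := by rw [← Finset.sum_mul, hαsum, one_mul]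
  rw [hsplit, mul_add, mul_add, trace_add, trace_add]
  calc _ ≤ ‖O‖ * ε₂ + ‖O‖ * ε₂ + ‖O‖ * ε₁ ^ 2 := (norm_add₃_le ..).trans (by gcongr)
    _ = ‖O‖ * (ε₁ ^ 2 + 2 * ε₂) := by ring

end Matrix

theorem mixing_lemma_supervised_learning_general {n K : ℕ} {S : Type*} [Fintype S]
    (O V : Matrix (Fin n) (Fin n) ℂ)
    (hV : Vᴴ * V = 1)
    (ρ : S → Matrix (Fin n) (Fin n) ℂ)
    (hρ : ∀ s, (ρ s).PosSemidef ∧ (ρ s).trace = 1)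
    (p : S → ℝ) (hp : ∀ s, 0 ≤ p s) (hpsum : ∑ s, p s = 1)
    (U : Fin K → Matrix (Fin n) (Fin n) ℂ)
    (α : Fin K → ℝ) (hα : ∀ k, 0 ≤ α k) (hαsum : ∑ k, α k = 1)
    (ε₁ ε₂ : ℝ)
    (hclose : ∀ k, ‖U k - V‖ ≤ ε₁)
    (hlcu : ‖(∑ k, (α k : ℂ) • U k) - V‖ ≤ ε₂)
    (h f : S → ℝ)
    (hh : ∀ s, h s = ((O * (V * ρ s * Vᴴ)).trace).re)
    (hf : ∀ s, f s = ((O * ∑ k, (α k : ℂ) • (U k * ρ s * (U k)ᴴ)).trace).re)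
    (δ₁ δ₂ : ℝ) (hδ₁ : δ₁ = 2 * ε₁ * ‖O‖) (hδ₂ : δ₂ = 2 * ε₂ * ‖O‖) :
    ∑ s, p s * |h s - f s| ≤ δ₁ ^ 2 / (4 * ‖O‖) + 2 * δ₂ := by
  simp only [Complex.coe_smul] at hlcu hf
  have hVnorm : ‖V‖ ≤ 1 := CStarRing.norm_le_one_of_mem_unitary (mem_unitaryGroup_iff'.mpr hV)
  have hpoint (s : S) : |h s - f s| ≤ ‖O‖ * (ε₁ ^ 2 + 2 * ε₂) := by
    rw [hh, hf, abs_sub_comm, ← Complex.sub_re, ← trace_sub, ← mul_sub]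
    exact (Complex.abs_re_le_norm _).trans <| norm_trace_mul_mixture_sub_le O V hVnorm
      (hρ s).1 (hρ s).2 U α hα hαsum hclose hlcu
  have hε₂ : 0 ≤ ε₂ := (norm_nonneg _).trans hlcu
  have hδ₁sq : δ₁ ^ 2 / (4 * ‖O‖) = ‖O‖ * ε₁ ^ 2 := by
    rcases (norm_nonneg O).eq_or_lt with hO | hO
    · simp [hδ₁, ← hO]
    · rw [hδ₁]; field_simp; ring
  calc ∑ s, p s * |h s - f s| ≤ ∑ s, p s * (‖O‖ * (ε₁ ^ 2 + 2 * ε₂)) :=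
        Finset.sum_le_sum fun s _ => mul_le_mul_of_nonneg_left (hpoint s) (hp s)
    _ = ‖O‖ * (ε₁ ^ 2 + 2 * ε₂) := by rw [← Finset.sum_mul, hpsum, one_mul]
    _ ≤ δ₁ ^ 2 / (4 * ‖O‖) + 2 * δ₂ := by
        rw [hδ₁sq, hδ₂]; nlinarith [mul_nonneg hε₂ (norm_nonneg O)]

/-- **Mixing lemma for supervised learning** (Lemma 1 of the paper).
If each sub-unitary `U k` is `ε₁`-close to the target unitary `V` in L2 operator norm,
and the linear combination `∑ k, α k • U k` is `ε₂`-close to `V`, then the expected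
prediction error of the density QNN over the data distribution is at most
`δ₁² / (4‖O‖) + 2δ₂` where `δᵢ = 2 εᵢ ‖O‖`. -/
theorem mixing_lemma_supervised_learning {n K : ℕ} {S : Type*} [Fintype S]
    (O V : Matrix (Fin n) (Fin n) ℂ)
    (hO : O.IsHermitian) (hOne : O ≠ 0)
    (hV : Vᴴ * V = 1)
    (ρ : S → Matrix (Fin n) (Fin n) ℂ)
    (hρ : ∀ s, (ρ s).PosSemidef ∧ (ρ s).trace = 1)
    (p : S → ℝ) (hp : ∀ s, 0 ≤ p s) (hpsum : ∑ s, p s = 1)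
    (U : Fin K → Matrix (Fin n) (Fin n) ℂ)
    (hU : ∀ k, (U k)ᴴ * U k = 1)
    (α : Fin K → ℝ) (hα : ∀ k, 0 ≤ α k) (hαsum : ∑ k, α k = 1)
    (ε₁ ε₂ : ℝ) (hε₁ : 0 ≤ ε₁) (hε₂ : 0 ≤ ε₂)
    (hclose : ∀ k, ‖U k - V‖ ≤ ε₁)
    (hlcu : ‖(∑ k, (α k : ℂ) • U k) - V‖ ≤ ε₂)
    (h f : S → ℝ)
    (hh : ∀ s, h s = ((O * (V * ρ s * Vᴴ)).trace).re)
    (hf : ∀ s, f s = ((O * ∑ k, (α k : ℂ) • (U k * ρ s * (U k)ᴴ)).trace).re)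
    (δ₁ δ₂ : ℝ) (hδ₁ : δ₁ = 2 * ε₁ * ‖O‖) (hδ₂ : δ₂ = 2 * ε₂ * ‖O‖) :
    ∑ s, p s * |h s - f s| ≤ δ₁ ^ 2 / (4 * ‖O‖) + 2 * δ₂ :=
  mixing_lemma_supervised_learning_general O V hV ρ hρ p hp hpsum U α hα hαsum ε₁ ε₂ hclose hlcu h f
    hh hf δ₁ δ₂ hδ₁ hδ₂
end

section
/- Let Q be a Hermitian n×n complex matrix with Q³ = Q, let B be an arbitrary n×n complex matrix, and let θ ∈ ℝ. Then exp(iθQ) B exp(−iθQ) − exp(−iθQ) B exp(iθQ) = −2i (sin θ) (BQ − QB) − 2i (sin θ)(cos θ − 1) (Q(QBQ) − (QBQ)Q). -/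
open Matrix
open scoped Nat

/-!
Since `Q³ = Q`, the powers `Qᵐ` with `m ≥ 1` are `Q` for odd `m` and `Q²` for even `m`, so the
exponential series of `z • Q` splits into the odd and even parts of the series of `sinh` and `cosh`:
`exp (z • Q) = 1 + sinh z • Q + (cosh z - 1) • Q²`. At `z = ±iθ` this is
`1 ± i sin θ • Q + (cos θ - 1) • Q²`, and in the difference of the two sandwiches of `B` the terms
even in `sin θ` cancel, leaving the two commutators.
-/

section Tripotent

variable {M : Type*} [Monoid M] {q : M}

theorem pow_two_mul_add_one_of_pow_three_eq_self (hq : q ^ 3 = q) (k : ℕ) :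
    q ^ (2 * k + 1) = q := by
  induction k with
  | zero => exact pow_one q
  | succ k ih => rw [show 2 * (k + 1) + 1 = 3 + 2 * k by ring, pow_add, hq, ← pow_succ', ih]

theorem pow_two_mul_add_two_of_pow_three_eq_self (hq : q ^ 3 = q) (k : ℕ) :
    q ^ (2 * k + 2) = q ^ 2 := by
  rw [pow_succ, pow_two_mul_add_one_of_pow_three_eq_self hq, sq]

end Tripotent

section Exp

variable {𝔸 : Type*} [Ring 𝔸] [Algebra ℂ 𝔸] [TopologicalSpace 𝔸] [IsTopologicalRing 𝔸]
  [ContinuousSMul ℂ 𝔸]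

theorem hasSum_exp_series_smul_of_pow_three_eq_self {Q : 𝔸} (hQ : Q ^ 3 = Q) (z : ℂ) :
    HasSum (fun m : ℕ => (m ! : ℂ)⁻¹ • (z • Q) ^ m)
      (1 + Complex.sinh z • Q + (Complex.cosh z - 1) • Q ^ 2) := by
  have hodd : HasSum (fun k : ℕ => (z ^ (2 * k + 1) / (2 * k + 1)!) • Q ^ (2 * k + 1))
      (Complex.sinh z • Q) := by
    simpa only [pow_two_mul_add_one_of_pow_three_eq_self hQ] using
      (Complex.hasSum_sinh z).smul_const Q
  have heven : HasSum (fun k : ℕ => (z ^ (2 * k + 2) / (2 * k + 2)!) • Q ^ (2 * k + 2))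
      ((Complex.cosh z - 1) • Q ^ 2) := by
    simpa [pow_two_mul_add_two_of_pow_three_eq_self hQ, mul_add] using
      ((hasSum_nat_add_iff' 1).mpr (Complex.hasSum_cosh z)).smul_const (Q ^ 2)
  rw [← hasSum_nat_add_iff' 1, add_assoc, Finset.sum_range_one, pow_zero, Nat.factorial_zero,
    Nat.cast_one, inv_one, one_smul, add_sub_cancel_left]
  simp only [smul_pow, smul_smul, ← div_eq_inv_mul]
  exact hodd.even_add_odd heven

variable [T2Space 𝔸]

theorem exp_smul_of_pow_three_eq_self {Q : 𝔸} (hQ : Q ^ 3 = Q) (z : ℂ) :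
    NormedSpace.exp (z • Q) = 1 + Complex.sinh z • Q + (Complex.cosh z - 1) • Q ^ 2 := by
  rw [NormedSpace.exp_eq_tsum ℂ]
  exact (hasSum_exp_series_smul_of_pow_three_eq_self hQ z).tsum_eq

end Exp

theorem quadratic_sandwich_sub_sandwich {R 𝔸 : Type*} [CommRing R] [Ring 𝔸] [Algebra R 𝔸]
    (Q B : 𝔸) (s c : R) :
    (1 + s • Q + c • Q ^ 2) * B * (1 - s • Q + c • Q ^ 2) -
        (1 - s • Q + c • Q ^ 2) * B * (1 + s • Q + c • Q ^ 2) =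
      (-(2 * s)) • ⁅B, Q⁆ - (2 * s * c) • ⁅Q, Q * B * Q⁆ := by
  simp only [Ring.lie_def, mul_add, add_mul, mul_sub, sub_mul, smul_mul_assoc, mul_smul_comm,
    one_mul, mul_one, smul_sub, sq, mul_assoc]
  module

theorem conj_exp_antisymmetrized_tripotent_general {n : ℕ}
    (Q B : Matrix (Fin n) (Fin n) ℂ) (hQ3 : Q ^ 3 = Q) (θ : ℝ) :
    NormedSpace.exp ((Complex.I * (θ : ℂ)) • Q) * B *
        NormedSpace.exp ((-(Complex.I * (θ : ℂ))) • Q) -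
      NormedSpace.exp ((-(Complex.I * (θ : ℂ))) • Q) * B *
        NormedSpace.exp ((Complex.I * (θ : ℂ)) • Q) =
    (-(2 * Complex.I * (Real.sin θ : ℂ))) • (B * Q - Q * B) -
      (2 * Complex.I * (Real.sin θ : ℂ) * ((Real.cos θ : ℂ) - 1)) •
        (Q * (Q * B * Q) - (Q * B * Q) * Q) := by
  have hsinh : Complex.sinh (Complex.I * θ) = Complex.I * Real.sin θ := by
    rw [mul_comm, Complex.sinh_mul_I, Complex.ofReal_sin, mul_comm]
  have hcosh : Complex.cosh (Complex.I * θ) = Real.cos θ := by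
    rw [mul_comm, Complex.cosh_mul_I, Complex.ofReal_cos]
  rw [exp_smul_of_pow_three_eq_self hQ3, exp_smul_of_pow_three_eq_self hQ3, Complex.sinh_neg,
    Complex.cosh_neg, hsinh, hcosh, neg_smul, ← sub_eq_add_neg]
  simpa only [Ring.lie_def, mul_assoc] using
    quadratic_sandwich_sub_sandwich Q B (Complex.I * Real.sin θ) (Real.cos θ - 1)

/-- Antisymmetrized Heisenberg conjugation identity for a Hermitian tripotent
generator `Q` (`Qᴴ = Q`, `Q³ = Q`):
`e^{iθQ} B e^{−iθQ} − e^{−iθQ} B e^{iθQ}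
  = −2i sin θ [B,Q] − 2i sin θ (cos θ − 1) [Q, QBQ]`. -/
theorem conj_exp_antisymmetrized_tripotent {n : ℕ}
    (Q B : Matrix (Fin n) (Fin n) ℂ) (hQherm : Qᴴ = Q) (hQ3 : Q ^ 3 = Q) (θ : ℝ) :
    NormedSpace.exp ((Complex.I * (θ : ℂ)) • Q) * B *
        NormedSpace.exp ((-(Complex.I * (θ : ℂ))) • Q) -
      NormedSpace.exp ((-(Complex.I * (θ : ℂ))) • Q) * B *
        NormedSpace.exp ((Complex.I * (θ : ℂ)) • Q) =
    (-(2 * Complex.I * (Real.sin θ : ℂ))) • (B * Q - Q * B) -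
      (2 * Complex.I * (Real.sin θ : ℂ) * ((Real.cos θ : ℂ) - 1)) •
        (Q * (Q * B * Q) - (Q * B * Q) * Q) :=
  conj_exp_antisymmetrized_tripotent_general Q B hQ3 θ
end

section
/- Let X, Y denote the Pauli matrices X = !![0,1;1,0] and Y = !![0,−i;i,0]. Then for every θ ∈ ℝ, the 4×4 matrix exp(−i(θ/2)(Y⊗X − X⊗Y)), in the Kronecker-product basis ordered |00⟩, |01⟩, |10⟩, |11⟩, equals the matrix with rows [1,0,0,0], [0, cos θ, −sin θ, 0], [0, sin θ, cos θ, 0], [0,0,0,1]. -/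
open Matrix
open scoped Kronecker

/-- The Pauli matrix `X`. -/
def PauliX : Matrix (Fin 2) (Fin 2) ℂ := !![0, 1; 1, 0]

/-- The Pauli matrix `Y`. -/
def PauliY : Matrix (Fin 2) (Fin 2) ℂ := !![0, -Complex.I; Complex.I, 0]

/-!
In the computational basis `Y ⊗ X - X ⊗ Y` is `2i` times the generator `J` of rotations of the
plane spanned by `|01⟩, |10⟩`, so the gate is `exp (θ J)`. The generator `J` is diagonalised by
the eigenvectors `|01⟩ ∓ i|10⟩` with eigenvalues `±i`, and `exp (θ J)` is then read off from
`exp (±iθ) = cos θ ± i sin θ`.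
-/

namespace Matrix

theorem reindex_tsum {ι m n m' n' R : Type*} [AddCommMonoid R] [TopologicalSpace R] [T2Space R]
    (eₘ : m ≃ m') (eₙ : n ≃ n') (f : ι → Matrix m n R) :
    reindex eₘ eₙ (∑' i, f i) = ∑' i, reindex eₘ eₙ (f i) :=
  Function.LeftInverse.map_tsum f (g := reindexAddEquiv R eₘ eₙ)
    (continuous_id.matrix_reindex eₘ eₙ) (continuous_id.matrix_reindex eₘ.symm eₙ.symm)
    (fun A => by simp)

theorem exp_reindex {m n 𝔸 : Type*} [Fintype m] [DecidableEq m] [Fintype n] [DecidableEq n]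
    [Ring 𝔸] [TopologicalSpace 𝔸] [IsTopologicalRing 𝔸] [T2Space 𝔸] [Algebra ℚ 𝔸]
    (e : m ≃ n) (A : Matrix m m 𝔸) :
    NormedSpace.exp (reindex e e A) = reindex e e (NormedSpace.exp A) := by
  simp_rw [NormedSpace.exp_eq_tsum_rat, reindex_tsum, ← coe_reindexAlgEquiv ℚ 𝔸, map_smul,
    map_pow]

end Matrix

namespace RBS

open Complex

/-- The ordering `|00⟩, |01⟩, |10⟩, |11⟩` of the computational basis of two qubits. -/
abbrev basisIndex : Fin 2 × Fin 2 ≃ Fin 4 := finProdFinEquiv.trans (finCongr (by norm_num))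

theorem reindex_basisIndex {α : Type*} (M : Matrix (Fin 2 × Fin 2) (Fin 2 × Fin 2) α) :
    reindex basisIndex basisIndex M =
      !![M (0, 0) (0, 0), M (0, 0) (0, 1), M (0, 0) (1, 0), M (0, 0) (1, 1);
         M (0, 1) (0, 0), M (0, 1) (0, 1), M (0, 1) (1, 0), M (0, 1) (1, 1);
         M (1, 0) (0, 0), M (1, 0) (0, 1), M (1, 0) (1, 0), M (1, 0) (1, 1);
         M (1, 1) (0, 0), M (1, 1) (0, 1), M (1, 1) (1, 0), M (1, 1) (1, 1)] := by
  ext i j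
  fin_cases i <;> fin_cases j <;> rfl

def generator : Matrix (Fin 4) (Fin 4) ℂ :=
  !![0, 0, 0, 0; 0, 0, -1, 0; 0, 1, 0, 0; 0, 0, 0, 0]

theorem reindex_pauliY_kronecker_pauliX_sub :
    reindex basisIndex basisIndex (PauliY ⊗ₖ PauliX - PauliX ⊗ₖ PauliY) = (2 * I) • generator := by
  rw [reindex_basisIndex]
  ext i j
  fin_cases i <;> fin_cases j <;> simp [PauliX, PauliY, generator] <;> ring

/-- Columns: the eigenvectors `|00⟩, |01⟩ - i|10⟩, |01⟩ + i|10⟩, |11⟩` of `generator`. -/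
def eigenbasis : Matrix (Fin 4) (Fin 4) ℂ :=
  !![1, 0, 0, 0; 0, 1, 1, 0; 0, -I, I, 0; 0, 0, 0, 1]

noncomputable def eigenbasisInv : Matrix (Fin 4) (Fin 4) ℂ :=
  !![1, 0, 0, 0; 0, 1 / 2, I / 2, 0; 0, 1 / 2, -I / 2, 0; 0, 0, 0, 1]

theorem eigenbasisInv_mul_eigenbasis : eigenbasisInv * eigenbasis = 1 := by
  ext i j
  fin_cases i <;> fin_cases j <;>
    simp [eigenbasis, eigenbasisInv, mul_apply, Fin.sum_univ_four, one_apply] <;> grind [I_sq]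

theorem inv_eigenbasis : eigenbasis⁻¹ = eigenbasisInv :=
  inv_eq_left_inv eigenbasisInv_mul_eigenbasis

theorem isUnit_eigenbasis : IsUnit eigenbasis :=
  (isUnit_iff_isUnit_det _).mpr (isUnit_det_of_left_inverse eigenbasisInv_mul_eigenbasis)

theorem generator_eq_conj_diagonal :
    generator = eigenbasis * diagonal ![0, I, -I, 0] * eigenbasis⁻¹ := by
  rw [inv_eigenbasis]
  ext i j
  fin_cases i <;> fin_cases j <;>
    simp [eigenbasis, eigenbasisInv, generator, mul_apply, Fin.sum_univ_four, vecMul_diagonal] <;>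
    grind [I_sq]

theorem eigenbasis_mul_diagonal_exp_mul_inv (θ : ℝ) :
    eigenbasis * diagonal ![1, cexp (θ * I), cexp (-θ * I), 1] * eigenbasis⁻¹ =
      !![1, 0, 0, 0;
         0, (Real.cos θ : ℂ), -(Real.sin θ : ℂ), 0;
         0, (Real.sin θ : ℂ), (Real.cos θ : ℂ), 0;
         0, 0, 0, 1] := by
  rw [inv_eigenbasis, ← cos_add_sin_I, ← cos_sub_sin_I]
  ext i j
  fin_cases i <;> fin_cases j <;>
    simp [eigenbasis, eigenbasisInv, mul_apply, Fin.sum_univ_four, vecMul_diagonal] <;>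
    grind [I_sq]

theorem exp_smul_generator (θ : ℝ) :
    NormedSpace.exp ((θ : ℂ) • generator) =
      !![1, 0, 0, 0;
         0, (Real.cos θ : ℂ), -(Real.sin θ : ℂ), 0;
         0, (Real.sin θ : ℂ), (Real.cos θ : ℂ), 0;
         0, 0, 0, 1] := by
  have hexp : NormedSpace.exp ((θ : ℂ) • ![0, I, -I, 0]) = ![1, cexp (θ * I), cexp (-θ * I), 1] := by
    ext k
    fin_cases k <;> simp [← exp_eq_exp_ℂ]
  rw [generator_eq_conj_diagonal, ← Matrix.smul_mul, ← Matrix.mul_smul, ← diagonal_smul,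
    exp_conj _ _ isUnit_eigenbasis, exp_diagonal, hexp, eigenbasis_mul_diagonal_exp_mul_inv]

end RBS

/-- Closed form of the reconfigurable beam splitter gate
`RBS(θ) = exp(−i(θ/2)(Y⊗X − X⊗Y))`, expressed in the Kronecker-product basis
ordered `|00⟩, |01⟩, |10⟩, |11⟩`. -/
theorem rbs_gate_closed_form (θ : ℝ) :
    Matrix.reindex (finProdFinEquiv.trans (finCongr (by norm_num)))
        (finProdFinEquiv.trans (finCongr (by norm_num)))
        (NormedSpace.exp ((-(Complex.I * ((θ : ℂ) / 2))) •
          (PauliY ⊗ₖ PauliX - PauliX ⊗ₖ PauliY))) =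
      !![1, 0, 0, 0;
         0, (Real.cos θ : ℂ), -(Real.sin θ : ℂ), 0;
         0, (Real.sin θ : ℂ), (Real.cos θ : ℂ), 0;
         0, 0, 0, 1] := by
  have hcoeff : -(Complex.I * ((θ : ℂ) / 2)) * (2 * Complex.I) = θ := by
    linear_combination -(θ : ℂ) * Complex.I_mul_I
  change reindex RBS.basisIndex RBS.basisIndex _ = _
  rw [← exp_reindex, ← coe_reindexAlgEquiv ℂ ℂ, map_smul, coe_reindexAlgEquiv,
    RBS.reindex_pauliY_kronecker_pauliX_sub, smul_smul, hcoeff]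
  exact RBS.exp_smul_generator θ
end
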